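/- arXiv:1706.00217 — 2 statements merged into one kernel-verified Lean document; each statement's English description precedes it below -/
import Mathlib

section
/- Let m be an integer with m − n ∈ {1, 2}. If z_n is an even eigenfunction at level n with eigenvalue Λ_n > 0 and z_m is an even eigenfunction at level m with eigenvalue Λ_m > 0, then Λ_n ≠ Λ_m. -/
noncomputable section

/-- `Omega k z`: `z` is infinitely differentiable on `ℝ` and
`z⁽ʲ⁾(−1) = z⁽ʲ⁾(1) = 0` for `j = 0, …, k−1`. -/
def Omega (k : ℕ) (z : ℝ → ℝ) : Prop :=
  ContDiff ℝ (⊤ : ℕ∞) z ∧ ∀ j < k, iteratedDeriv j z (-1) = 0 ∧ iteratedDeriv j z 1 = 0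

/-- `z` is not identically zero on `[−1,1]`. -/
def NotIdZero (z : ℝ → ℝ) : Prop := ∃ x ∈ Set.Icc (-1:ℝ) 1, z x ≠ 0

/-- The operator `L^{2k}(Λ) z = (−1)^k z^{(2k)} − Λ (−1)^{k−p} z^{(2k−2p)}`. -/
def Lop (p k : ℕ) (Λ : ℝ) (z : ℝ → ℝ) : ℝ → ℝ := fun x =>
  (-1 : ℝ) ^ k * iteratedDeriv (2 * k) z x
    - Λ * (-1 : ℝ) ^ (k - p) * iteratedDeriv (2 * k - 2 * p) z x

/-- `z` is an even eigenfunction at level `k` with eigenvalue `Λ`. -/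
def EvenEig (p k : ℕ) (Λ : ℝ) (z : ℝ → ℝ) : Prop :=
  Omega k z ∧ NotIdZero z ∧ (∀ x, z (-x) = z x) ∧
    ∀ x ∈ Set.Icc (-1:ℝ) 1, Lop p k Λ z x = 0



open Set intervalIntegral MeasureTheory
open scoped ContDiff

-- foundation lemmas
lemma smooth_deriv_top {f : ℝ → ℝ} (hf : ContDiff ℝ (⊤ : ℕ∞) f) : ContDiff ℝ (⊤ : ℕ∞) (deriv f) := by
  exact (contDiff_infty_iff_deriv.mp hf).2

lemma smooth_iter_top {f : ℝ → ℝ} (hf : ContDiff ℝ (⊤ : ℕ∞) f) (j : ℕ) :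
    ContDiff ℝ (⊤ : ℕ∞) (iteratedDeriv j f) := by
  induction j with
  | zero => simpa using hf
  | succ j ih => rw [iteratedDeriv_succ]; exact smooth_deriv_top ih

lemma smooth_iter {f : ℝ → ℝ} (hf : ContDiff ℝ ∞ f) (j : ℕ) :
    ContDiff ℝ ∞ (iteratedDeriv j f) := by
  rw [iteratedDeriv_eq_iterate]
  exact ContDiff.iterate_deriv j hf

lemma cont_iter {f : ℝ → ℝ} (hf : ContDiff ℝ ∞ f) (j : ℕ) :
    Continuous (iteratedDeriv j f) := (smooth_iter hf j).continuous

lemma diff_iter {f : ℝ → ℝ} (hf : ContDiff ℝ ∞ f) (j : ℕ) :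
    Differentiable ℝ (iteratedDeriv j f) := by
  have := smooth_iter hf j
  exact this.differentiable (by simp)

lemma hasDerivAt_iter {f : ℝ → ℝ} (hf : ContDiff ℝ ∞ f) (j : ℕ) (x : ℝ) :
    HasDerivAt (iteratedDeriv j f) (iteratedDeriv (j+1) f x) x := by
  rw [iteratedDeriv_succ]
  exact ((diff_iter hf j) x).hasDerivAt

lemma iter_add {f : ℝ → ℝ} (i j : ℕ) :
    iteratedDeriv (i + j) f = iteratedDeriv i (iteratedDeriv j f) := by
  induction i with
  | zero => simp
  | succ i ih => rw [show i + 1 + j = (i + j) + 1 by omega, iteratedDeriv_succ, ih,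
      iteratedDeriv_succ]

lemma even_iter {z : ℝ → ℝ} (hz : ∀ x, z (-x) = z x) (j : ℕ) (x : ℝ) :
    iteratedDeriv j z (-x) = (-1:ℝ)^j * iteratedDeriv j z x := by
  have h0 : (fun x => z (-x)) = z := funext hz
  have := iteratedDeriv_comp_neg j z x
  rw [h0] at this
  have h2 : ((-1:ℝ))^j * ((-1:ℝ))^j = 1 := by
    rw [← pow_add]; exact Even.neg_one_pow ⟨j, rfl⟩
  rw [this, smul_eq_mul, ← mul_assoc, h2, one_mul]
-- EqOn propagation and vanishing lemmas
section P2
variable {f g w : ℝ → ℝ}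

lemma derivEqOn (hf : ContDiff ℝ ∞ f) (h : ∀ x ∈ Icc (-1:ℝ) 1, f x = 0) :
    ∀ x ∈ Icc (-1:ℝ) 1, deriv f x = 0 := by
  have hIoo : ∀ x ∈ Ioo (-1:ℝ) 1, deriv f x = 0 := by
    intro x hx
    have hev : f =ᶠ[nhds x] (fun _ => (0:ℝ)) := by
      filter_upwards [isOpen_Ioo.mem_nhds hx] with t ht
      exact h t (Ioo_subset_Icc_self ht)
    rw [hev.deriv_eq, deriv_const]
  have hcl : Set.EqOn (deriv f) (fun _ => (0:ℝ)) (closure (Ioo (-1:ℝ) 1)) := by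
    apply Set.EqOn.closure (fun x hx => hIoo x hx)
    · exact hf.continuous_deriv (by exact_mod_cast le_top)
    · exact continuous_const
  intro x hx
  have : x ∈ closure (Ioo (-1:ℝ) 1) := by
    rwa [closure_Ioo (by norm_num : (-1:ℝ) ≠ 1)]
  exact hcl this

lemma iterEqOn (hf : ContDiff ℝ ∞ f) (h : ∀ x ∈ Icc (-1:ℝ) 1, f x = 0) (j : ℕ) :
    ∀ x ∈ Icc (-1:ℝ) 1, iteratedDeriv j f x = 0 := by
  induction j with
  | zero => simpa using h
  | succ j ih =>
    intro x hx
    rw [iteratedDeriv_succ]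
    exact derivEqOn (smooth_iter hf j) ih x hx

lemma zero_of_iter_zero (hf : ContDiff ℝ ∞ f) :
    ∀ r : ℕ, (∀ x ∈ Icc (-1:ℝ) 1, iteratedDeriv r f x = 0) →
      (∀ i < r, iteratedDeriv i f 1 = 0) → ∀ x ∈ Icc (-1:ℝ) 1, f x = 0 := by
  intro r
  induction r with
  | zero => intro h _; simpa using h
  | succ r ih =>
    intro h1 h2
    apply ih
    · intro x hx
      have hsub : uIcc (1:ℝ) x ⊆ Icc (-1:ℝ) 1 := by
        rw [show Icc (-1:ℝ) 1 = uIcc (-1:ℝ) 1 from (uIcc_of_le (by norm_num)).symm]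
        refine uIcc_subset_uIcc ?_ ?_ <;>
          rw [uIcc_of_le (by norm_num : (-1:ℝ) ≤ 1)]
        · exact right_mem_Icc.mpr (by norm_num)
        · exact hx
      have hftc : ∫ t in (1:ℝ)..x, iteratedDeriv (r+1) f t
          = iteratedDeriv r f x - iteratedDeriv r f 1 := by
        apply intervalIntegral.integral_eq_sub_of_hasDerivAt
        · intro t _
          exact hasDerivAt_iter hf r t
        · exact (cont_iter hf (r+1)).intervalIntegrable _ _
      have hzero : ∫ t in (1:ℝ)..x, iteratedDeriv (r+1) f t = 0 := by
        rw [intervalIntegral.integral_congr (g := fun _ => (0:ℝ))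
          (fun t ht => h1 t (hsub ht))]
        simp
      have h1' : iteratedDeriv r f 1 = 0 := h2 r (by omega)
      rw [hzero] at hftc
      linarith [hftc]
    · intro i hi; exact h2 i (by omega)

end P2
section P3
variable {f g w z : ℝ → ℝ}

lemma iter_comb (hf : ContDiff ℝ ∞ f) (hg : ContDiff ℝ ∞ g) (c a : ℝ) (j : ℕ) :
    iteratedDeriv j (fun x => c * f x - a * g x)
      = fun x => c * iteratedDeriv j f x - a * iteratedDeriv j g x := by
  induction j with
  | zero => simp
  | succ j ih =>
    rw [iteratedDeriv_succ, ih]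
    funext x
    have h1 : HasDerivAt (fun x => c * iteratedDeriv j f x - a * iteratedDeriv j g x)
        (c * iteratedDeriv (j+1) f x - a * iteratedDeriv (j+1) g x) x :=
      ((hasDerivAt_iter hf j x).const_mul c).sub ((hasDerivAt_iter hg j x).const_mul a)
    rw [h1.deriv]

lemma neg_one_sq_pow (k : ℕ) : ((-1:ℝ))^k * ((-1:ℝ))^k = 1 := by
  rw [← pow_add]; exact Even.neg_one_pow ⟨k, rfl⟩

lemma sq_int_zero (hw : Continuous w)
    (h : (∫ x in (-1:ℝ)..1, w x * w x) = 0) :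
    ∀ x ∈ Icc (-1:ℝ) 1, w x = 0 := by
  have hle : (-1:ℝ) ≤ 1 := by norm_num
  have hi : IntervalIntegrable (fun x => w x * w x) volume (-1:ℝ) 1 :=
    (hw.mul hw).intervalIntegrable _ _
  have hae : (fun x => w x * w x) =ᵐ[volume.restrict (Ioc (-1:ℝ) 1)] 0 := by
    have := (_root_.intervalIntegral.integral_eq_zero_iff_of_le_of_nonneg_ae hle
      (Filter.Eventually.of_forall (fun x => mul_self_nonneg (w x))) hi).mp h
    simpa using this
  have hIoc : Set.EqOn (fun x => w x * w x) (fun _ => (0:ℝ)) (Ioc (-1:ℝ) 1) := by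
    apply MeasureTheory.Measure.eqOn_of_ae_eq hae
    · exact (hw.mul hw).continuousOn
    · exact continuousOn_const
    · rw [interior_Ioc, closure_Ioo (by norm_num : (-1:ℝ) ≠ 1)]
      exact Ioc_subset_Icc_self
  have hIcc : Set.EqOn (fun x => w x * w x) (fun _ => (0:ℝ)) (Icc (-1:ℝ) 1) := by
    have := Set.EqOn.closure (hIoc) (hw.mul hw) continuous_const
    rwa [closure_Ioc (by norm_num : (-1:ℝ) ≠ 1)] at this
  intro x hx
  exact mul_self_eq_zero.mp (hIcc hx)

end P3
section P4
variable {f g F G : ℝ → ℝ}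

lemma uIcc_eq : uIcc (-1:ℝ) 1 = Icc (-1:ℝ) 1 := uIcc_of_le (by norm_num)

lemma int_zero_of_eqOn (h : ∀ x ∈ Icc (-1:ℝ) 1, F x = 0) :
    (∫ x in (-1:ℝ)..1, F x) = 0 := by
  rw [intervalIntegral.integral_congr (g := fun _ => (0:ℝ))
    (fun t ht => h t (uIcc_eq ▸ ht))]
  simp

/-- One integration by parts step on `[-1,1]`, with explicit `HasDerivAt`. -/
lemma ibp_once (hF : ContDiff ℝ ∞ F) (hG : ContDiff ℝ ∞ G) :
    (∫ x in (-1:ℝ)..1, deriv F x * G x)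
      = F 1 * G 1 - F (-1) * G (-1) - ∫ x in (-1:ℝ)..1, F x * deriv G x := by
  have hF' : Continuous (deriv F) := hF.continuous_deriv (by exact_mod_cast le_top)
  have hG' : Continuous (deriv G) := hG.continuous_deriv (by exact_mod_cast le_top)
  have h := intervalIntegral.integral_mul_deriv_eq_deriv_mul
    (a := (-1:ℝ)) (b := (1:ℝ)) (u := G) (v := F) (u' := deriv G) (v' := deriv F)
    (fun x _ => ((hG.differentiable (by simp)) x).hasDerivAt)
    (fun x _ => ((hF.differentiable (by simp)) x).hasDerivAt)
    (hG'.intervalIntegrable _ _) (hF'.intervalIntegrable _ _)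
  have e1 : (∫ x in (-1:ℝ)..1, G x * deriv F x) = ∫ x in (-1:ℝ)..1, deriv F x * G x :=
    intervalIntegral.integral_congr (fun x _ => mul_comm _ _)
  have e2 : (∫ x in (-1:ℝ)..1, deriv G x * F x) = ∫ x in (-1:ℝ)..1, F x * deriv G x :=
    intervalIntegral.integral_congr (fun x _ => mul_comm _ _)
  rw [e1, e2] at h
  rw [h]; ring

/-- Repeated integration by parts with vanishing boundary terms. -/
lemma ibp_chain (hf : ContDiff ℝ ∞ f) :
    ∀ (r : ℕ) (g : ℝ → ℝ), ContDiff ℝ ∞ g →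
      (∀ i < r, iteratedDeriv i g (-1) = 0 ∧ iteratedDeriv i g 1 = 0) →
      (∫ x in (-1:ℝ)..1, iteratedDeriv r f x * g x)
        = (-1:ℝ)^r * ∫ x in (-1:ℝ)..1, f x * iteratedDeriv r g x := by
  intro r
  induction r with
  | zero => intro g _ _; simp
  | succ r ih =>
    intro g hg hbc
    have hg0 : g 1 = 0 := (hbc 0 (by omega)).2
    have hg0' : g (-1) = 0 := (hbc 0 (by omega)).1
    have step : (∫ x in (-1:ℝ)..1, iteratedDeriv (r+1) f x * g x)
        = - ∫ x in (-1:ℝ)..1, iteratedDeriv r f x * deriv g x := by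
      have h1 : (∫ x in (-1:ℝ)..1, deriv (iteratedDeriv r f) x * g x)
          = iteratedDeriv r f 1 * g 1 - iteratedDeriv r f (-1) * g (-1)
            - ∫ x in (-1:ℝ)..1, iteratedDeriv r f x * deriv g x :=
        ibp_once (smooth_iter hf r) hg
      rw [hg0, hg0'] at h1
      have h2 : (∫ x in (-1:ℝ)..1, iteratedDeriv (r+1) f x * g x)
          = ∫ x in (-1:ℝ)..1, deriv (iteratedDeriv r f) x * g x := by
        rw [← iteratedDeriv_succ]
      rw [h2, h1]; ring
    have hdg : ContDiff ℝ ∞ (deriv g) := (contDiff_infty_iff_deriv.mp hg).2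
    have hbc' : ∀ i < r, iteratedDeriv i (deriv g) (-1) = 0
        ∧ iteratedDeriv i (deriv g) 1 = 0 := by
      intro i hi
      rw [← iteratedDeriv_succ']
      exact hbc (i+1) (by omega)
    rw [step, ih (deriv g) hdg hbc']
    rw [← iteratedDeriv_succ']
    rw [pow_succ]
    ring

end P4
-- these depend on the problem definitions; will be placed after them in final file
section P5
variable {z : ℝ → ℝ} {p k : ℕ} {Λ : ℝ}

lemma signsub (h : p ≤ k) : ((-1:ℝ))^(k-p) = (-1:ℝ)^k * (-1:ℝ)^p := by
  have h1 : ((-1:ℝ))^k = (-1:ℝ)^(k-p) * (-1:ℝ)^p := by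
    rw [← pow_add, Nat.sub_add_cancel h]
  rw [h1, mul_assoc, neg_one_sq_pow, mul_one]

lemma clean_of_eig (h : ∀ x ∈ Icc (-1:ℝ) 1, Lop p k Λ z x = 0) (hpk : p ≤ k) :
    ∀ x ∈ Icc (-1:ℝ) 1, iteratedDeriv (2*k) z x
      = (Λ * (-1:ℝ)^p) * iteratedDeriv (2*k-2*p) z x := by
  intro x hx
  have h1 := h x hx
  unfold Lop at h1
  rw [signsub hpk] at h1
  have h2 := neg_one_sq_pow k
  linear_combination ((-1:ℝ)^k) * h1
    - (iteratedDeriv (2*k) z x - Λ * (-1:ℝ)^p * iteratedDeriv (2*k-2*p) z x) * h2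

lemma eig_of_clean (h : ∀ x ∈ Icc (-1:ℝ) 1, iteratedDeriv (2*k) z x
      = (Λ * (-1:ℝ)^p) * iteratedDeriv (2*k-2*p) z x) (hpk : p ≤ k) :
    ∀ x ∈ Icc (-1:ℝ) 1, Lop p k Λ z x = 0 := by
  intro x hx
  have h1 := h x hx
  unfold Lop
  rw [signsub hpk, h1]
  ring

/-- differentiating a clean ODE identity twice -/
lemma derivODE {μ : ℝ} {a b : ℕ} (hz : ContDiff ℝ ∞ z)
    (h : ∀ x ∈ Icc (-1:ℝ) 1, iteratedDeriv a z x = μ * iteratedDeriv b z x) :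
    ∀ x ∈ Icc (-1:ℝ) 1, iteratedDeriv (a+2) z x = μ * iteratedDeriv (b+2) z x := by
  have key : ∀ (a b : ℕ),
      (∀ x ∈ Icc (-1:ℝ) 1, iteratedDeriv a z x = μ * iteratedDeriv b z x) →
      ∀ x ∈ Icc (-1:ℝ) 1, iteratedDeriv (a+1) z x = μ * iteratedDeriv (b+1) z x := by
    intro a b hab
    set F : ℝ → ℝ := fun x => iteratedDeriv a z x - μ * iteratedDeriv b z x with hF
    have hFs : ContDiff ℝ ∞ F :=
      (smooth_iter hz a).sub (contDiff_const.mul (smooth_iter hz b))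
    have hF0 : ∀ x ∈ Icc (-1:ℝ) 1, F x = 0 := by
      intro x hx; simp only [hF]; rw [hab x hx]; ring
    have hd := derivEqOn hFs hF0
    intro x hx
    have hder : deriv F x = iteratedDeriv (a+1) z x - μ * iteratedDeriv (b+1) z x := by
      have h1 : HasDerivAt F (iteratedDeriv (a+1) z x - μ * iteratedDeriv (b+1) z x) x :=
        (hasDerivAt_iter hz a x).sub ((hasDerivAt_iter hz b x).const_mul μ)
      exact h1.deriv
    have := hd x hx
    rw [hder] at this
    linarith
  have h1 := key a b h
  have h2 := key (a+1) (b+1) h1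
  simpa using h2

end P5
section P6
variable {z : ℝ → ℝ} {p k : ℕ} {Λ : ℝ}

lemma energy (hz : ContDiff ℝ ∞ z)
    (hbc : ∀ j < k, iteratedDeriv j z (-1) = 0 ∧ iteratedDeriv j z 1 = 0)
    (hpk : p ≤ k)
    (hode : ∀ x ∈ Icc (-1:ℝ) 1, iteratedDeriv (2*k) z x
      = (Λ * (-1:ℝ)^p) * iteratedDeriv (2*k-2*p) z x) :
    (∫ x in (-1:ℝ)..1, iteratedDeriv k z x * iteratedDeriv k z x)
      = Λ * ∫ x in (-1:ℝ)..1, iteratedDeriv (k-p) z x * iteratedDeriv (k-p) z x := by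
  set μ : ℝ := Λ * (-1:ℝ)^p with hμ
  have hsplit : (∫ x in (-1:ℝ)..1, iteratedDeriv (2*k) z x * z x)
      = μ * ∫ x in (-1:ℝ)..1, iteratedDeriv (2*k-2*p) z x * z x := by
    have h0 : (∫ x in (-1:ℝ)..1,
        (iteratedDeriv (2*k) z x * z x - μ * (iteratedDeriv (2*k-2*p) z x * z x))) = 0 := by
      apply int_zero_of_eqOn
      intro x hx
      rw [hode x hx]; ring
    have hi1 : IntervalIntegrable (fun x => iteratedDeriv (2*k) z x * z x)
        volume (-1:ℝ) 1 := ((cont_iter hz _).mul hz.continuous).intervalIntegrable _ _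
    have hi2 : IntervalIntegrable (fun x => μ * (iteratedDeriv (2*k-2*p) z x * z x))
        volume (-1:ℝ) 1 :=
      (continuous_const.mul ((cont_iter hz _).mul hz.continuous)).intervalIntegrable _ _
    rw [intervalIntegral.integral_sub hi1 hi2, intervalIntegral.integral_const_mul] at h0
    linarith
  have e1 : (∫ x in (-1:ℝ)..1, iteratedDeriv (2*k) z x * z x)
      = (-1:ℝ)^k * ∫ x in (-1:ℝ)..1, iteratedDeriv k z x * iteratedDeriv k z x := by
    rw [show 2*k = k + k by ring, iter_add]
    exact ibp_chain (smooth_iter hz k) k z hz hbc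
  have e2 : (∫ x in (-1:ℝ)..1, iteratedDeriv (2*k-2*p) z x * z x)
      = (-1:ℝ)^(k-p) * ∫ x in (-1:ℝ)..1,
          iteratedDeriv (k-p) z x * iteratedDeriv (k-p) z x := by
    rw [show 2*k-2*p = (k-p) + (k-p) by omega, iter_add]
    exact ibp_chain (smooth_iter hz (k-p)) (k-p) z hz
      (fun i hi => hbc i (by omega))
  rw [e1, e2, signsub hpk] at hsplit
  have h2 := neg_one_sq_pow k
  have h3 := neg_one_sq_pow p
  set A := ∫ x in (-1:ℝ)..1, iteratedDeriv k z x * iteratedDeriv k z x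
  set B := ∫ x in (-1:ℝ)..1, iteratedDeriv (k-p) z x * iteratedDeriv (k-p) z x
  -- hsplit : (-1)^k * A = μ * ((-1)^k * (-1)^p * B), μ = Λ * (-1)^p
  rw [hμ] at hsplit
  linear_combination ((-1:ℝ)^k) * hsplit
    - (A - Λ * ((-1:ℝ)^p * (-1:ℝ)^p) * B) * h2 + Λ * B * h3

end P6
section P7
variable {z : ℝ → ℝ} {p k : ℕ} {Λ : ℝ}

lemma split_int {μ : ℝ} {a b : ℕ} {G : ℝ → ℝ} (hz : ContDiff ℝ ∞ z) (hG : Continuous G)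
    (h : ∀ x ∈ Icc (-1:ℝ) 1, iteratedDeriv a z x = μ * iteratedDeriv b z x) :
    (∫ x in (-1:ℝ)..1, iteratedDeriv a z x * G x)
      = μ * ∫ x in (-1:ℝ)..1, iteratedDeriv b z x * G x := by
  have h0 : (∫ x in (-1:ℝ)..1,
      (iteratedDeriv a z x * G x - μ * (iteratedDeriv b z x * G x))) = 0 := by
    apply int_zero_of_eqOn
    intro x hx
    rw [h x hx]; ring
  have hi1 : IntervalIntegrable (fun x => iteratedDeriv a z x * G x) volume (-1:ℝ) 1 :=
    ((cont_iter hz _).mul hG).intervalIntegrable _ _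
  have hi2 : IntervalIntegrable (fun x => μ * (iteratedDeriv b z x * G x)) volume (-1:ℝ) 1 :=
    (continuous_const.mul ((cont_iter hz _).mul hG)).intervalIntegrable _ _
  rw [intervalIntegral.integral_sub hi1 hi2, intervalIntegral.integral_const_mul] at h0
  linarith

lemma dgi (hz : ContDiff ℝ ∞ z) (i : ℕ) :
    iteratedDeriv i (fun x => x * deriv z x)
      = fun x => x * iteratedDeriv (i+1) z x + (i:ℝ) * iteratedDeriv i z x := by
  induction i with
  | zero =>
    funext x; simp [iteratedDeriv_one]
  | succ i ih =>
    rw [iteratedDeriv_succ, ih]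
    funext x
    have h1 : HasDerivAt (fun x => x * iteratedDeriv (i+1) z x + (i:ℝ) * iteratedDeriv i z x)
        (x * iteratedDeriv (i+2) z x + ((i:ℝ)+1) * iteratedDeriv (i+1) z x) x := by
      have hb : HasDerivAt (fun x : ℝ => x * iteratedDeriv (i+1) z x)
          (1 * iteratedDeriv (i+1) z x + x * iteratedDeriv (i+2) z x) x :=
        (hasDerivAt_id x).mul (hasDerivAt_iter hz (i+1) x)
      have hc : HasDerivAt (fun x : ℝ => (i:ℝ) * iteratedDeriv i z x)
          ((i:ℝ) * iteratedDeriv (i+1) z x) x :=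
        (hasDerivAt_iter hz i x).const_mul (i:ℝ)
      have := hb.add hc
      refine this.congr_deriv ?_
      ring
    rw [h1.deriv]
    push_cast
    ring

/-- Pohozaev-type identity:  c² = p Λ B. -/
lemma pohozaev (hz : ContDiff ℝ ∞ z)
    (hbc : ∀ j < k, iteratedDeriv j z (-1) = 0 ∧ iteratedDeriv j z 1 = 0)
    (hev : ∀ x, z (-x) = z x) (hp1 : 1 ≤ p) (hpk : p < k)
    (hode : ∀ x ∈ Icc (-1:ℝ) 1, iteratedDeriv (2*k) z x
      = (Λ * (-1:ℝ)^p) * iteratedDeriv (2*k-2*p) z x) :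
    iteratedDeriv k z 1 * iteratedDeriv k z 1
      = (p:ℝ) * Λ * ∫ x in (-1:ℝ)..1, iteratedDeriv (k-p) z x * iteratedDeriv (k-p) z x := by
  have hzt := hz
  set g : ℝ → ℝ := fun x => x * deriv z x with hgdef
  have hg : ContDiff ℝ ∞ g := contDiff_id.mul (contDiff_infty_iff_deriv.mp hz).2
  set c := iteratedDeriv k z 1 with hc
  set A := ∫ x in (-1:ℝ)..1, iteratedDeriv k z x * iteratedDeriv k z x with hA
  set B := ∫ x in (-1:ℝ)..1, iteratedDeriv (k-p) z x * iteratedDeriv (k-p) z x with hB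
  have hwneg : iteratedDeriv k z (-1) = (-1:ℝ)^k * c := by
    have := even_iter hev k 1; simpa using this
  -- boundary values of iterated derivs of g
  have hgb : ∀ i < k - 1, iteratedDeriv i g (-1) = 0 ∧ iteratedDeriv i g 1 = 0 := by
    intro i hi
    simp only [hgdef, dgi hz i]
    constructor
    · rw [(hbc (i+1) (by omega)).1, (hbc i (by omega)).1]; ring
    · rw [(hbc (i+1) (by omega)).2, (hbc i (by omega)).2]; ring
  -- first reduction for the top order term
  have e1 : (∫ x in (-1:ℝ)..1, iteratedDeriv (2*k) z x * g x)
      = (-1:ℝ)^(k-1) * ∫ x in (-1:ℝ)..1,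
          iteratedDeriv (k+1) z x * iteratedDeriv (k-1) g x := by
    rw [show 2*k = (k-1) + (k+1) by omega, iter_add]
    exact ibp_chain (smooth_iter hz (k+1)) (k-1) g hg hgb
  -- the inner integral
  have key1 : (∫ x in (-1:ℝ)..1, iteratedDeriv (k+1) z x * iteratedDeriv (k-1) g x)
      = c*c - ((k:ℝ) - 1/2) * A := by
    have hu : ∀ x ∈ uIcc (-1:ℝ) 1, HasDerivAt (iteratedDeriv (k-1) g)
        (iteratedDeriv k g x) x := by
      intro x _
      have := hasDerivAt_iter hg (k-1) x
      rwa [show k - 1 + 1 = k by omega] at this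
    have hv : ∀ x ∈ uIcc (-1:ℝ) 1, HasDerivAt (iteratedDeriv k z)
        (iteratedDeriv (k+1) z x) x := fun x _ => hasDerivAt_iter hz k x
    have hibp := intervalIntegral.integral_mul_deriv_eq_deriv_mul
      (a := (-1:ℝ)) (b := (1:ℝ))
      (u := iteratedDeriv (k-1) g) (v := iteratedDeriv k z)
      (u' := iteratedDeriv k g) (v' := iteratedDeriv (k+1) z)
      hu hv ((cont_iter hg k).intervalIntegrable _ _)
      ((cont_iter hz (k+1)).intervalIntegrable _ _)
    have hgb1 : iteratedDeriv (k-1) g 1 = c := by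
      simp only [hgdef, dgi hz (k-1), show k - 1 + 1 = k by omega]
      rw [(hbc (k-1) (by omega)).2]
      simp [hc]
    have hgbm1 : iteratedDeriv (k-1) g (-1) = -((-1:ℝ)^k * c) := by
      simp only [hgdef, dgi hz (k-1), show k - 1 + 1 = k by omega]
      rw [(hbc (k-1) (by omega)).1, hwneg]
      ring
    -- ∫ d^k g * w = J + k A  with  J = ∫ x w w'
    have hsum : (∫ x in (-1:ℝ)..1, iteratedDeriv k g x * iteratedDeriv k z x)
        = (∫ x in (-1:ℝ)..1, (x * iteratedDeriv (k+1) z x) * iteratedDeriv k z x)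
          + (k:ℝ) * A := by
      have e : ∀ x, iteratedDeriv k g x * iteratedDeriv k z x
          = (x * iteratedDeriv (k+1) z x) * iteratedDeriv k z x
            + (k:ℝ) * (iteratedDeriv k z x * iteratedDeriv k z x) := by
        intro x; simp only [hgdef, dgi hz k]; ring
      rw [intervalIntegral.integral_congr (g := fun x =>
          (x * iteratedDeriv (k+1) z x) * iteratedDeriv k z x
            + (k:ℝ) * (iteratedDeriv k z x * iteratedDeriv k z x)) (fun x _ => e x)]
      rw [intervalIntegral.integral_add, intervalIntegral.integral_const_mul]
      · exact ((continuous_id.mul (cont_iter hz (k+1))).mul (cont_iter hz k)).intervalIntegrable _ _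
      · exact (continuous_const.mul ((cont_iter hz k).mul (cont_iter hz k))).intervalIntegrable _ _
    -- J = c² - A/2
    have hJ : (∫ x in (-1:ℝ)..1, (x * iteratedDeriv k z x) * iteratedDeriv (k+1) z x)
        = c*c - A/2 := by
      have hu2 : ∀ x ∈ uIcc (-1:ℝ) 1, HasDerivAt (fun x => x * iteratedDeriv k z x)
          (iteratedDeriv k z x + x * iteratedDeriv (k+1) z x) x := by
        intro x _
        show HasDerivAt (fun x => x * iteratedDeriv k z x)
          (iteratedDeriv k z x + x * iteratedDeriv (k+1) z x) x
        have := (hasDerivAt_id x).mul (hasDerivAt_iter hz k x)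
        refine this.congr_deriv ?_; simp only [id_eq]; ring
      have hibp2 := intervalIntegral.integral_mul_deriv_eq_deriv_mul
        (a := (-1:ℝ)) (b := (1:ℝ))
        (u := fun x => x * iteratedDeriv k z x) (v := iteratedDeriv k z)
        (u' := fun x => iteratedDeriv k z x + x * iteratedDeriv (k+1) z x)
        (v' := iteratedDeriv (k+1) z)
        hu2 hv (((cont_iter hz k).add (continuous_id.mul (cont_iter hz (k+1)))).intervalIntegrable _ _)
        ((cont_iter hz (k+1)).intervalIntegrable _ _)
      have hex : (∫ x in (-1:ℝ)..1,
          (iteratedDeriv k z x + x * iteratedDeriv (k+1) z x) * iteratedDeriv k z x)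
          = A + ∫ x in (-1:ℝ)..1, (x * iteratedDeriv k z x) * iteratedDeriv (k+1) z x := by
        have e : ∀ x, (iteratedDeriv k z x + x * iteratedDeriv (k+1) z x) * iteratedDeriv k z x
            = iteratedDeriv k z x * iteratedDeriv k z x
              + (x * iteratedDeriv k z x) * iteratedDeriv (k+1) z x := by intro x; ring
        rw [intervalIntegral.integral_congr (g := fun x =>
          iteratedDeriv k z x * iteratedDeriv k z x
            + (x * iteratedDeriv k z x) * iteratedDeriv (k+1) z x) (fun x _ => e x)]
        rw [intervalIntegral.integral_add]
        · exact ((cont_iter hz k).mul (cont_iter hz k)).intervalIntegrable _ _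
        · exact ((continuous_id.mul (cont_iter hz k)).mul (cont_iter hz (k+1))).intervalIntegrable _ _
      beta_reduce at hibp2
      rw [hex, hwneg] at hibp2
      have hsq := neg_one_sq_pow k
      linear_combination (1/2) * hibp2 + (c*c/2) * hsq
    -- put together
    have hre : (∫ x in (-1:ℝ)..1, iteratedDeriv (k+1) z x * iteratedDeriv (k-1) g x)
        = ∫ x in (-1:ℝ)..1, iteratedDeriv (k-1) g x * iteratedDeriv (k+1) z x :=
      intervalIntegral.integral_congr (fun x _ => mul_comm _ _)
    have hre2 : (∫ x in (-1:ℝ)..1, (x * iteratedDeriv (k+1) z x) * iteratedDeriv k z x)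
        = ∫ x in (-1:ℝ)..1, (x * iteratedDeriv k z x) * iteratedDeriv (k+1) z x :=
      intervalIntegral.integral_congr (fun x _ => by ring)
    rw [hre, hibp, hgb1, hgbm1, hwneg, hsum, hre2, hJ]
    have hsq := neg_one_sq_pow k
    linear_combination (c*c) * hsq
  -- lower order term
  have e2 : (∫ x in (-1:ℝ)..1, iteratedDeriv (2*k-2*p) z x * g x)
      = (-1:ℝ)^(k-p-1) * ∫ x in (-1:ℝ)..1,
          iteratedDeriv (k-p+1) z x * iteratedDeriv (k-p-1) g x := by
    rw [show 2*k-2*p = (k-p-1) + (k-p+1) by omega, iter_add]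
    exact ibp_chain (smooth_iter hz (k-p+1)) (k-p-1) g hg (fun i hi => hgb i (by omega))
  have key2 : (∫ x in (-1:ℝ)..1, iteratedDeriv (k-p+1) z x * iteratedDeriv (k-p-1) g x)
      = (1/2 - ((k:ℝ)-(p:ℝ))) * B := by
    have hv2 : ∀ x ∈ uIcc (-1:ℝ) 1, HasDerivAt (iteratedDeriv (k-p) z)
        (iteratedDeriv (k-p+1) z x) x := fun x _ => hasDerivAt_iter hz (k-p) x
    have hu3 : ∀ x ∈ uIcc (-1:ℝ) 1, HasDerivAt (iteratedDeriv (k-p-1) g)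
        (iteratedDeriv (k-p) g x) x := by
      intro x _
      have := hasDerivAt_iter hg (k-p-1) x
      rwa [show k - p - 1 + 1 = k - p by omega] at this
    have hibp3 := intervalIntegral.integral_mul_deriv_eq_deriv_mul
      (a := (-1:ℝ)) (b := (1:ℝ))
      (u := iteratedDeriv (k-p-1) g) (v := iteratedDeriv (k-p) z)
      (u' := iteratedDeriv (k-p) g) (v' := iteratedDeriv (k-p+1) z)
      hu3 hv2 ((cont_iter hg (k-p)).intervalIntegrable _ _)
      ((cont_iter hz (k-p+1)).intervalIntegrable _ _)
    have hb1 : iteratedDeriv (k-p-1) g 1 = 0 := by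
      simp only [hgdef, dgi hz (k-p-1), show k - p - 1 + 1 = k - p by omega]
      rw [(hbc (k-p) (by omega)).2, (hbc (k-p-1) (by omega)).2]; ring
    have hbm1 : iteratedDeriv (k-p-1) g (-1) = 0 := by
      simp only [hgdef, dgi hz (k-p-1), show k - p - 1 + 1 = k - p by omega]
      rw [(hbc (k-p) (by omega)).1, (hbc (k-p-1) (by omega)).1]; ring
    have hw20 : iteratedDeriv (k-p) z 1 = 0 := (hbc (k-p) (by omega)).2
    have hw20' : iteratedDeriv (k-p) z (-1) = 0 := (hbc (k-p) (by omega)).1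
    have hsum2 : (∫ x in (-1:ℝ)..1, iteratedDeriv (k-p) g x * iteratedDeriv (k-p) z x)
        = (∫ x in (-1:ℝ)..1, (x * iteratedDeriv (k-p+1) z x) * iteratedDeriv (k-p) z x)
          + ((k:ℝ)-(p:ℝ)) * B := by
      have e : ∀ x, iteratedDeriv (k-p) g x * iteratedDeriv (k-p) z x
          = (x * iteratedDeriv (k-p+1) z x) * iteratedDeriv (k-p) z x
            + ((k:ℝ)-(p:ℝ)) * (iteratedDeriv (k-p) z x * iteratedDeriv (k-p) z x) := by
        intro x
        simp only [hgdef, dgi hz (k-p), show k - p + 1 = k - p + 1 by rfl]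
        rw [Nat.cast_sub (le_of_lt hpk)]
        ring
      rw [intervalIntegral.integral_congr (g := fun x =>
          (x * iteratedDeriv (k-p+1) z x) * iteratedDeriv (k-p) z x
            + ((k:ℝ)-(p:ℝ)) * (iteratedDeriv (k-p) z x * iteratedDeriv (k-p) z x)) (fun x _ => e x)]
      rw [intervalIntegral.integral_add, intervalIntegral.integral_const_mul]
      · exact ((continuous_id.mul (cont_iter hz (k-p+1))).mul (cont_iter hz (k-p))).intervalIntegrable _ _
      · exact (continuous_const.mul ((cont_iter hz (k-p)).mul (cont_iter hz (k-p)))).intervalIntegrable _ _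
    have hJ2 : (∫ x in (-1:ℝ)..1, (x * iteratedDeriv (k-p) z x) * iteratedDeriv (k-p+1) z x)
        = - B/2 := by
      have hu4 : ∀ x ∈ uIcc (-1:ℝ) 1, HasDerivAt (fun x => x * iteratedDeriv (k-p) z x)
          (iteratedDeriv (k-p) z x + x * iteratedDeriv (k-p+1) z x) x := by
        intro x _
        show HasDerivAt (fun x => x * iteratedDeriv (k-p) z x)
          (iteratedDeriv (k-p) z x + x * iteratedDeriv (k-p+1) z x) x
        have := (hasDerivAt_id x).mul (hasDerivAt_iter hz (k-p) x)
        refine this.congr_deriv ?_; simp only [id_eq]; ring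
      have hibp4 := intervalIntegral.integral_mul_deriv_eq_deriv_mul
        (a := (-1:ℝ)) (b := (1:ℝ))
        (u := fun x => x * iteratedDeriv (k-p) z x) (v := iteratedDeriv (k-p) z)
        (u' := fun x => iteratedDeriv (k-p) z x + x * iteratedDeriv (k-p+1) z x)
        (v' := iteratedDeriv (k-p+1) z)
        hu4 hv2 (((cont_iter hz (k-p)).add (continuous_id.mul (cont_iter hz (k-p+1)))).intervalIntegrable _ _)
        ((cont_iter hz (k-p+1)).intervalIntegrable _ _)
      have hex2 : (∫ x in (-1:ℝ)..1,
          (iteratedDeriv (k-p) z x + x * iteratedDeriv (k-p+1) z x) * iteratedDeriv (k-p) z x)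
          = B + ∫ x in (-1:ℝ)..1, (x * iteratedDeriv (k-p) z x) * iteratedDeriv (k-p+1) z x := by
        have e : ∀ x, (iteratedDeriv (k-p) z x + x * iteratedDeriv (k-p+1) z x) * iteratedDeriv (k-p) z x
            = iteratedDeriv (k-p) z x * iteratedDeriv (k-p) z x
              + (x * iteratedDeriv (k-p) z x) * iteratedDeriv (k-p+1) z x := by intro x; ring
        rw [intervalIntegral.integral_congr (g := fun x =>
          iteratedDeriv (k-p) z x * iteratedDeriv (k-p) z x
            + (x * iteratedDeriv (k-p) z x) * iteratedDeriv (k-p+1) z x) (fun x _ => e x)]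
        rw [intervalIntegral.integral_add]
        · exact ((cont_iter hz (k-p)).mul (cont_iter hz (k-p))).intervalIntegrable _ _
        · exact ((continuous_id.mul (cont_iter hz (k-p))).mul (cont_iter hz (k-p+1))).intervalIntegrable _ _
      beta_reduce at hibp4
      rw [hex2, hw20, hw20'] at hibp4
      linarith
    have hre3 : (∫ x in (-1:ℝ)..1, iteratedDeriv (k-p+1) z x * iteratedDeriv (k-p-1) g x)
        = ∫ x in (-1:ℝ)..1, iteratedDeriv (k-p-1) g x * iteratedDeriv (k-p+1) z x :=
      intervalIntegral.integral_congr (fun x _ => mul_comm _ _)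
    have hre4 : (∫ x in (-1:ℝ)..1, (x * iteratedDeriv (k-p+1) z x) * iteratedDeriv (k-p) z x)
        = ∫ x in (-1:ℝ)..1, (x * iteratedDeriv (k-p) z x) * iteratedDeriv (k-p+1) z x :=
      intervalIntegral.integral_congr (fun x _ => by ring)
    rw [hre3, hibp3, hb1, hbm1, hw20, hw20', hsum2, hre4, hJ2]
    ring
  -- assemble
  have hgc : Continuous g := hg.continuous
  have hsplit := split_int hz hgc hode
  rw [e1, key1, e2, key2] at hsplit
  have energyA : A = Λ * B := energy hz hbc (le_of_lt hpk) hode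
  have hsgn : ((-1:ℝ))^p * ((-1:ℝ))^(k-p-1) = ((-1:ℝ))^(k-1) := by
    rw [← pow_add]; congr 1; omega
  have hsq1 := neg_one_sq_pow (k-1)
  have h1 : c*c - ((k:ℝ)-1/2)*A = Λ * ((1/2 - ((k:ℝ)-(p:ℝ))) * B) := by
    linear_combination ((-1:ℝ)^(k-1)) * hsplit
      + (Λ * ((1/2 - ((k:ℝ)-(p:ℝ))) * B) - (c*c - ((k:ℝ)-1/2)*A)) * hsq1
      + (Λ * ((-1:ℝ)^(k-1)) * ((1/2 - ((k:ℝ)-(p:ℝ))) * B)) * hsgn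
  linear_combination h1 + ((k:ℝ)-1/2) * energyA

end P7
section P8
variable {u v z : ℝ → ℝ} {p k : ℕ} {Λ : ℝ}

/-- derivative of the bilinear concomitant sum -/
lemma hasDerivS (hu : ContDiff ℝ ∞ u) (hv : ContDiff ℝ ∞ v) {N : ℕ} (hN : Even N) (x : ℝ) :
    HasDerivAt (fun x => ∑ i ∈ Finset.range N,
        (-1:ℝ)^i * (iteratedDeriv i u x * iteratedDeriv (N-1-i) v x))
      (u x * iteratedDeriv N v x - iteratedDeriv N u x * v x) x := by
  have h := HasDerivAt.fun_sum
    (A := fun i x => (-1:ℝ)^i * (iteratedDeriv i u x * iteratedDeriv (N-1-i) v x))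
    (A' := fun i => (-1:ℝ)^i * (iteratedDeriv (i+1) u x * iteratedDeriv (N-1-i) v x
        + iteratedDeriv i u x * iteratedDeriv (N-1-i+1) v x))
    (u := Finset.range N) (x := x)
    (fun i _ => ((hasDerivAt_iter hu i x).mul (hasDerivAt_iter hv (N-1-i) x)).const_mul
      ((-1:ℝ)^i))
  refine h.congr_deriv ?_
  rw [eq_comm]
  have hterm : ∀ i ∈ Finset.range N,
      (-1:ℝ)^i * (iteratedDeriv (i+1) u x * iteratedDeriv (N-1-i) v x
        + iteratedDeriv i u x * iteratedDeriv (N-1-i+1) v x)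
      = (fun j => (-1:ℝ)^j * (iteratedDeriv j u x * iteratedDeriv (N-j) v x)) i
        - (fun j => (-1:ℝ)^j * (iteratedDeriv j u x * iteratedDeriv (N-j) v x)) (i+1) := by
    intro i hi
    have hiN : i < N := Finset.mem_range.mp hi
    simp only
    rw [show N-1-i+1 = N-i by omega, show N-(i+1) = N-1-i by omega, pow_succ]
    ring
  rw [Finset.sum_congr rfl hterm, Finset.sum_range_sub']
  simp [iteratedDeriv_zero, Even.neg_one_pow hN]

/-- The concomitant identity for eigenfunctions at consecutive levels. -/
lemma concomitant (hp1 : 1 ≤ p) (hpk : p < k)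
    (hu : ContDiff ℝ ∞ u) (hv : ContDiff ℝ ∞ v)
    (hevu : ∀ x, u (-x) = u x) (hevv : ∀ x, v (-x) = v x)
    (hbcu : ∀ j < k, iteratedDeriv j u (-1) = 0 ∧ iteratedDeriv j u 1 = 0)
    (hbcv : ∀ j < k+1, iteratedDeriv j v (-1) = 0 ∧ iteratedDeriv j v 1 = 0)
    (hodeu : ∀ x ∈ Icc (-1:ℝ) 1, iteratedDeriv (2*(k+1)) u x
      = (Λ * (-1:ℝ)^p) * iteratedDeriv (2*(k+1)-2*p) u x)
    (hodev : ∀ x ∈ Icc (-1:ℝ) 1, iteratedDeriv (2*(k+1)) v x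
      = (Λ * (-1:ℝ)^p) * iteratedDeriv (2*(k+1)-2*p) v x) :
    iteratedDeriv k u 1 * iteratedDeriv (k+1) v 1 = 0 := by
  set μ : ℝ := Λ * (-1:ℝ)^p with hμ
  set N : ℕ := 2*(k+1) with hN
  set M : ℕ := 2*(k+1)-2*p with hM
  have hNe : Even N := ⟨k+1, by omega⟩
  have hMe : Even M := ⟨k+1-p, by omega⟩
  set S1 : ℝ → ℝ := fun x => ∑ i ∈ Finset.range N,
    (-1:ℝ)^i * (iteratedDeriv i u x * iteratedDeriv (N-1-i) v x) with hS1
  set S2 : ℝ → ℝ := fun x => ∑ i ∈ Finset.range M,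
    (-1:ℝ)^i * (iteratedDeriv i u x * iteratedDeriv (M-1-i) v x) with hS2
  set P : ℝ → ℝ := fun x => S1 x - μ * S2 x with hP
  set g : ℝ → ℝ := fun x => (u x * iteratedDeriv N v x - iteratedDeriv N u x * v x)
    - μ * (u x * iteratedDeriv M v x - iteratedDeriv M u x * v x) with hg
  have hPd : ∀ x : ℝ, HasDerivAt P (g x) x := by
    intro x
    exact (hasDerivS hu hv hNe x).sub ((hasDerivS hu hv hMe x).const_mul μ)
  have hgc : Continuous g := by
    apply Continuous.sub
    · exact (hu.continuous.mul (cont_iter hv N)).sub ((cont_iter hu N).mul hv.continuous)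
    · exact continuous_const.mul
        ((hu.continuous.mul (cont_iter hv M)).sub ((cont_iter hu M).mul hv.continuous))
  have hftc : (∫ x in (-1:ℝ)..1, g x) = P 1 - P (-1) :=
    intervalIntegral.integral_eq_sub_of_hasDerivAt (fun x _ => hPd x)
      (hgc.intervalIntegrable _ _)
  have hg0 : (∫ x in (-1:ℝ)..1, g x) = 0 := by
    apply int_zero_of_eqOn
    intro x hx
    simp only [hg]
    rw [hodeu x hx, hodev x hx]
    ring
  -- parity: P (-1) = - P 1
  have hodd : ∀ (w1 w2 : ℝ → ℝ) (L : ℕ), Even L → L ≠ 0 →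
      (∀ x, w1 (-x) = w1 x) → (∀ x, w2 (-x) = w2 x) →
      (∑ i ∈ Finset.range L, (-1:ℝ)^i * (iteratedDeriv i w1 (-1) * iteratedDeriv (L-1-i) w2 (-1)))
      = - ∑ i ∈ Finset.range L, (-1:ℝ)^i * (iteratedDeriv i w1 1 * iteratedDeriv (L-1-i) w2 1) := by
    intro w1 w2 L hLe hL0 he1 he2
    rw [← Finset.sum_neg_distrib]
    apply Finset.sum_congr rfl
    intro i hi
    have hiL : i < L := Finset.mem_range.mp hi
    have e1 : iteratedDeriv i w1 (-1) = (-1:ℝ)^i * iteratedDeriv i w1 1 := by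
      simpa using even_iter he1 i 1
    have e2 : iteratedDeriv (L-1-i) w2 (-1) = (-1:ℝ)^(L-1-i) * iteratedDeriv (L-1-i) w2 1 := by
      simpa using even_iter he2 (L-1-i) 1
    rw [e1, e2]
    have hεδ : (-1:ℝ)^i * (-1:ℝ)^(L-1-i) = -1 := by
      rw [← pow_add, show i + (L-1-i) = L-1 by omega]
      apply Odd.neg_one_pow
      obtain ⟨r, hr⟩ := hLe
      exact ⟨r - 1, by omega⟩
    linear_combination (iteratedDeriv i w1 1 * iteratedDeriv (L-1-i) w2 1 * (-1:ℝ)^i) * hεδ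
  have hP1 : P 1 = - P (-1) := by
    have hs1 := hodd u v N hNe (by omega) hevu hevv
    have hs2 := hodd u v M hMe (by omega) hevu hevv
    simp only [hP, hS1, hS2]
    rw [hs1, hs2]
    ring
  -- evaluate P 1
  have hS1v : S1 1 = (-1:ℝ)^k * (iteratedDeriv k u 1 * iteratedDeriv (k+1) v 1) := by
    simp only [hS1]
    rw [Finset.sum_eq_single k]
    · rw [show N-1-k = k+1 by omega]
    · intro b hb hbk
      have hbN : b < N := Finset.mem_range.mp hb
      rcases lt_or_gt_of_ne hbk with h | h
      · rw [(hbcu b h).2]; ring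
      · rw [(hbcv (N-1-b) (by omega)).2]; ring
    · intro hk
      exact absurd (Finset.mem_range.mpr (by omega)) hk
  have hS2v : S2 1 = 0 := by
    simp only [hS2]
    apply Finset.sum_eq_zero
    intro i hi
    have hiM : i < M := Finset.mem_range.mp hi
    by_cases hik : i < k
    · rw [(hbcu i hik).2]; ring
    · rw [(hbcv (M-1-i) (by omega)).2]; ring
  have hP10 : P 1 = 0 := by
    rw [hg0] at hftc
    linarith [hftc, hP1]
  simp only [hP, hS2v, hS1v] at hP10
  have := neg_one_sq_pow k
  linear_combination ((-1:ℝ)^k) * hP10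
    - (iteratedDeriv k u 1 * iteratedDeriv (k+1) v 1) * this

end P8
section P9
variable {u v z : ℝ → ℝ} {p k : ℕ} {Λ : ℝ}

lemma eig_deriv_ne (hp1 : 1 ≤ p) (hpk : p < k) (hΛ : 0 < Λ) (hz : EvenEig p k Λ z) :
    iteratedDeriv k z 1 ≠ 0 := by
  obtain ⟨⟨hzt, hbc⟩, hnz, hev, hlop⟩ := hz
  have hz1 : ContDiff ℝ ∞ z := hzt.of_le (by simp)
  have hode := clean_of_eig hlop (le_of_lt hpk)
  have hpoh := pohozaev hz1 hbc hev hp1 hpk hode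
  intro hc0
  rw [hc0] at hpoh
  have hB : (∫ x in (-1:ℝ)..1, iteratedDeriv (k-p) z x * iteratedDeriv (k-p) z x) = 0 := by
    have hne : ((p:ℝ) * Λ) ≠ 0 := by
      have : (0:ℝ) < (p:ℝ) := by exact_mod_cast hp1
      positivity
    rcases mul_eq_zero.mp (by linarith [hpoh] :
        (p:ℝ) * Λ * (∫ x in (-1:ℝ)..1,
          iteratedDeriv (k-p) z x * iteratedDeriv (k-p) z x) = 0) with h | h
    · exact absurd h hne
    · exact h
  have hzero := sq_int_zero (cont_iter hz1 (k-p)) hB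
  have hall := zero_of_iter_zero hz1 (k-p) hzero (fun i hi => (hbc i (by omega)).2)
  obtain ⟨x, hx, hxn⟩ := hnz
  exact hxn (hall x hx)

lemma consecutive_false (hp1 : 1 ≤ p) (hpk : p < k) (hΛ : 0 < Λ)
    (hU : EvenEig p k Λ u) (hV : EvenEig p (k+1) Λ v) : False := by
  have ha := eig_deriv_ne hp1 hpk hΛ hU
  have hb := eig_deriv_ne hp1 (by omega : p < k+1) hΛ hV
  obtain ⟨⟨hut, hbcu⟩, _, hevu, hlopu⟩ := hU
  obtain ⟨⟨hvt, hbcv⟩, _, hevv, hlopv⟩ := hV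
  have hu1 : ContDiff ℝ ∞ u := hut.of_le (by simp)
  have hv1 : ContDiff ℝ ∞ v := hvt.of_le (by simp)
  have hodeu0 := clean_of_eig hlopu (le_of_lt hpk)
  have hodeu1 := derivODE hu1 hodeu0
  have hodeu : ∀ x ∈ Icc (-1:ℝ) 1, iteratedDeriv (2*(k+1)) u x
      = (Λ * (-1:ℝ)^p) * iteratedDeriv (2*(k+1)-2*p) u x := by
    intro x hx
    have := hodeu1 x hx
    rw [show 2*(k+1) = 2*k+2 by ring, show (2*k+2-2*p:ℕ) = 2*k-2*p+2 by omega]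
    exact this
  have hodev := clean_of_eig hlopv (by omega : p ≤ k+1)
  have hprod := concomitant hp1 hpk hu1 hv1 hevu hevv hbcu hbcv hodeu hodev
  rcases mul_eq_zero.mp hprod with h | h
  · exact ha h
  · exact hb h

end P9

theorem stmt14 (p n m : ℕ) (hp : 1 ≤ p) (hpn : p < n)
    (hm : m = n + 1 ∨ m = n + 2)
    (Λn Λm : ℝ) (hΛn : 0 < Λn) (hΛm : 0 < Λm) (zn zm : ℝ → ℝ)
    (hzn : EvenEig p n Λn zn) (hzm : EvenEig p m Λm zm) :
    Λn ≠ Λm := by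
  intro heq
  rw [← heq] at hzm
  rcases hm with hm | hm
  · subst hm
    exact consecutive_false hp hpn hΛn hzn hzm
  · subst hm
    -- reduction of the m = n+2 case
    have hzncopy := hzn
    have hzmcopy := hzm
    obtain ⟨⟨hznt, hbczn⟩, hnzzn, hevzn, hlopzn⟩ := hzncopy
    obtain ⟨⟨hzmt, hbczm⟩, hnzzm, hevzm, hlopzm⟩ := hzmcopy
    have hzn1 : ContDiff ℝ ∞ zn := hznt.of_le (by simp)
    have hzm1 : ContDiff ℝ ∞ zm := hzmt.of_le (by simp)
    set a : ℝ := iteratedDeriv n zn 1 with hadef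
    set c : ℝ := iteratedDeriv (n+2) zm 1 with hcdef
    have ha : a ≠ 0 := eig_deriv_ne hp hpn hΛn hzn
    have hc : c ≠ 0 := by
      have := eig_deriv_ne hp (by omega : p < n+2) hΛn hzm
      exact this
    set y : ℝ → ℝ := fun x => c * zn x - a * iteratedDeriv 2 zm x with hydef
    have hyt : ContDiff ℝ (⊤ : ℕ∞) y :=
      (contDiff_const.mul hznt).sub (contDiff_const.mul (smooth_iter_top hzmt 2))
    have hy1 : ContDiff ℝ ∞ y := hyt.of_le (by simp)
    have itery : ∀ j, iteratedDeriv j y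
        = fun x => c * iteratedDeriv j zn x - a * iteratedDeriv (j+2) zm x := by
      intro j
      have h1 := iter_comb hzn1 (smooth_iter hzm1 2) c a j
      rw [hydef, h1]
      funext x
      rw [iter_add j 2]
    have heveny : ∀ x, y (-x) = y x := by
      intro x
      have h2 : iteratedDeriv 2 zm (-x) = iteratedDeriv 2 zm x := by
        have := even_iter hevzm 2 x; simpa using this
      simp only [hydef, hevzn x, h2]
    have hodezn := clean_of_eig hlopzn (le_of_lt hpn)
    have hodezn2 := derivODE hzn1 hodezn
    have hodezm := clean_of_eig hlopzm (by omega : p ≤ n+2)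
    set μ : ℝ := Λn * (-1:ℝ)^p with hμdef
    have hbcy : ∀ j < n+1, iteratedDeriv j y (-1) = 0 ∧ iteratedDeriv j y 1 = 0 := by
      intro j hj
      rw [itery j]
      rcases Nat.lt_or_ge j n with hjn | hjn
      · constructor
        · simp only
          rw [(hbczn j hjn).1, (hbczm (j+2) (by omega)).1]; ring
        · simp only
          rw [(hbczn j hjn).2, (hbczm (j+2) (by omega)).2]; ring
      · have hjeq : j = n := by omega
        subst hjeq
        constructor
        · simp only
          have e1 : iteratedDeriv j zn (-1) = (-1:ℝ)^j * a := by
            simpa [hadef] using even_iter hevzn j 1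
          have e2 : iteratedDeriv (j+2) zm (-1) = (-1:ℝ)^(j+2) * c := by
            simpa [hcdef] using even_iter hevzm (j+2) 1
          rw [e1, e2, pow_add]
          ring
        · simp only
          rw [← hadef, ← hcdef]; ring
    have hodey : ∀ x ∈ Icc (-1:ℝ) 1, iteratedDeriv (2*(n+1)) y x
        = μ * iteratedDeriv (2*(n+1)-2*p) y x := by
      intro x hx
      rw [itery (2*(n+1)), itery (2*(n+1)-2*p)]
      simp only
      have h1 : iteratedDeriv (2*(n+1)) zn x = μ * iteratedDeriv (2*(n+1)-2*p) zn x := by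
        have := hodezn2 x hx
        rw [show 2*(n+1) = 2*n+2 by ring, show (2*n+2-2*p:ℕ) = 2*n-2*p+2 by omega]
        exact this
      have h2 : iteratedDeriv (2*(n+1)+2) zm x = μ * iteratedDeriv (2*(n+1)-2*p+2) zm x := by
        have := hodezm x hx
        rw [show 2*(n+1)+2 = 2*(n+2) by ring, show 2*(n+1)-2*p+2 = 2*(n+2)-2*p by omega]
        exact this
      rw [h1, h2]
      ring
    by_cases hy0 : ∀ x ∈ Icc (-1:ℝ) 1, y x = 0
    · -- degenerate case : zm itself is an eigenfunction at level n+1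
      have hyall : ∀ j, ∀ x ∈ Icc (-1:ℝ) 1, iteratedDeriv j y x = 0 := by
        intro j x hx
        exact iterEqOn hy1 hy0 j x hx
      have hrel : ∀ j, ∀ x ∈ Icc (-1:ℝ) 1,
          c * iteratedDeriv j zn x = a * iteratedDeriv (j+2) zm x := by
        intro j x hx
        have := hyall j x hx
        rw [itery j] at this
        simp only at this
        linarith
      have hcleanzm : ∀ x ∈ Icc (-1:ℝ) 1, iteratedDeriv (2*(n+1)) zm x
          = (Λn * (-1:ℝ)^p) * iteratedDeriv (2*(n+1)-2*p) zm x := by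
        intro x hx
        have e1 : c * iteratedDeriv (2*n) zn x = a * iteratedDeriv (2*n+2) zm x :=
          hrel (2*n) x hx
        have e2 : c * iteratedDeriv (2*n-2*p) zn x = a * iteratedDeriv (2*n-2*p+2) zm x :=
          hrel (2*n-2*p) x hx
        have e3 := hodezn x hx
        have key : a * iteratedDeriv (2*n+2) zm x = μ * (a * iteratedDeriv (2*n-2*p+2) zm x) := by
          rw [← e1, ← e2, e3, hμdef]
          ring
        have := mul_left_cancel₀ ha (by linarith [key] :
          a * iteratedDeriv (2*n+2) zm x = a * (μ * iteratedDeriv (2*n-2*p+2) zm x))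
        rw [show 2*(n+1) = 2*n+2 by ring, show (2*n+2-2*p:ℕ) = 2*n-2*p+2 by omega]
        exact this
      have hzm' : EvenEig p (n+1) Λn zm := by
        refine ⟨⟨hzmt, fun j hj => hbczm j (by omega)⟩, hnzzm, hevzm, ?_⟩
        exact eig_of_clean hcleanzm (by omega : p ≤ n+1)
      exact consecutive_false hp hpn hΛn hzn hzm'
    · -- nondegenerate : y is an eigenfunction at level n+1
      push_neg at hy0
      obtain ⟨x0, hx0, hx0ne⟩ := hy0
      have hyEig : EvenEig p (n+1) Λn y := by
        refine ⟨⟨hyt, hbcy⟩, ⟨x0, hx0, hx0ne⟩, heveny, ?_⟩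
        exact eig_of_clean hodey (by omega : p ≤ n+1)
      exact consecutive_false hp hpn hΛn hzn hyEig
end
end

section
/- Let z be an even eigenfunction at level n with eigenvalue Λ > 0, let λ_0, …, λ_{2p−1} be the 2p distinct complex roots of λ^{2p} = Λ, and suppose z(x) = R(x) + P(x) on [−1,1], where R(x) = Σ_{j=0}^{2p−1} r_j e^{i λ_j x} is real-valued and even with r_j ∈ ℂ, and P is a polynomial of degree at most 2n−2p−2. If ρ : ℝ → ℝ is an infinitely differentiable function with R(x) = ρ(x²) for all x ∈ ℝ, then ρ^{(k)}(1) = 0 for every integer k with n−p ≤ k ≤ n−1. -/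
noncomputable section

open Polynomial Set
open scoped ContDiff

lemma natLeInfty (n : ℕ) : (n : WithTop ℕ∞) ≤ ∞ := by exact_mod_cast le_top

lemma myContDiffPoly (p : ℝ[X]) : ContDiff ℝ ∞ (fun x : ℝ => p.eval x) := by
  have : (fun x : ℝ => p.eval x)
      = fun x => ∑ i ∈ Finset.range (p.natDegree + 1), p.coeff i * x ^ i :=
    funext fun x => by rw [Polynomial.eval_eq_sum_range]
  rw [this]
  exact ContDiff.sum fun i _ => contDiff_const.mul (contDiff_id.pow i)

lemma myIteratedDerivAdd (n : ℕ) (f g : ℝ → ℝ) (hf : ContDiff ℝ ∞ f) (hg : ContDiff ℝ ∞ g)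
    (x : ℝ) :
    iteratedDeriv n (fun y => f y + g y) x = iteratedDeriv n f x + iteratedDeriv n g x := by
  have : (fun y => f y + g y) = f + g := rfl
  rw [this]
  simp_rw [← iteratedDerivWithin_univ]
  exact iteratedDerivWithin_add (Set.mem_univ x) uniqueDiffOn_univ
    ((hf.of_le (natLeInfty n)).contDiffWithinAt) ((hg.of_le (natLeInfty n)).contDiffWithinAt)

lemma myIteratedDerivSub (n : ℕ) (f g : ℝ → ℝ) (hf : ContDiff ℝ ∞ f) (hg : ContDiff ℝ ∞ g)
    (x : ℝ) :
    iteratedDeriv n (fun y => f y - g y) x = iteratedDeriv n f x - iteratedDeriv n g x := by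
  have : (fun y => f y - g y) = f - g := rfl
  rw [this]
  simp_rw [← iteratedDerivWithin_univ]
  exact iteratedDerivWithin_sub (Set.mem_univ x) uniqueDiffOn_univ
    ((hf.of_le (natLeInfty n)).contDiffWithinAt) ((hg.of_le (natLeInfty n)).contDiffWithinAt)

lemma myIteratedDerivPoly (σ : ℝ[X]) (k : ℕ) :
    iteratedDeriv k (fun x : ℝ => σ.eval x) = fun x => (derivative^[k] σ).eval x := by
  induction k with
  | zero => simp
  | succ k ih =>
    rw [iteratedDeriv_succ, ih]
    funext x
    rw [Polynomial.deriv, Function.iterate_succ_apply']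

lemma myClaimF : ∀ m : ℕ, ∀ v g : ℝ → ℝ, ContDiff ℝ ∞ v → ContDiff ℝ ∞ g →
    (∀ k < m, iteratedDeriv k v 1 = 0) →
    iteratedDeriv m (fun x => g x * v (x ^ 2)) 1 = 2 ^ m * g 1 * iteratedDeriv m v 1 := by
  intro m
  induction m with
  | zero => intro v g hv hg _; simp
  | succ m ih =>
    intro v g hv hg hvk
    have hsq : ContDiff ℝ ∞ (fun y : ℝ => y ^ 2) := contDiff_id.pow 2
    have hvsq : ContDiff ℝ ∞ (fun y : ℝ => v (y ^ 2)) := hv.comp hsq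
    have hv' : ContDiff ℝ ∞ (deriv v) := (contDiff_infty_iff_deriv.mp hv).2
    have hg' : ContDiff ℝ ∞ (deriv g) := (contDiff_infty_iff_deriv.mp hg).2
    have hd : ∀ x : ℝ, HasDerivAt (fun y => g y * v (y ^ 2))
        (deriv g x * v (x ^ 2) + g x * (deriv v (x ^ 2) * (2 * x))) x := by
      intro x
      have hq : HasDerivAt (fun y : ℝ => y ^ 2) (2 * x) x := by
        simpa using hasDerivAt_pow 2 x
      have hv2 : HasDerivAt (fun y : ℝ => v (y ^ 2)) (deriv v (x ^ 2) * (2 * x)) x :=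
        ((hv.differentiable (by simp)) (x ^ 2)).hasDerivAt.comp x hq
      exact ((hg.differentiable (by simp)) x).hasDerivAt.mul hv2
    have hde : deriv (fun y => g y * v (y ^ 2))
        = fun x => deriv g x * v (x ^ 2) + (g x * (2 * x)) * deriv v (x ^ 2) := by
      funext x
      rw [(hd x).deriv]; ring
    rw [iteratedDeriv_succ', hde]
    have hsplit : iteratedDeriv m
        (fun x => deriv g x * v (x ^ 2) + (g x * (2 * x)) * deriv v (x ^ 2)) 1
        = iteratedDeriv m (fun x => deriv g x * v (x ^ 2)) 1
          + iteratedDeriv m (fun x => (g x * (2 * x)) * deriv v (x ^ 2)) 1 :=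
      myIteratedDerivAdd m _ _ (hg'.mul hvsq)
        ((hg.mul (contDiff_const.mul contDiff_id)).mul (hv'.comp hsq)) 1
    rw [hsplit]
    have h1 := ih v (deriv g) hv hg' (fun k hk => hvk k (hk.trans (Nat.lt_succ_self m)))
    have h2 := ih (deriv v) (fun x => g x * (2 * x)) hv'
      (hg.mul (contDiff_const.mul contDiff_id))
      (fun k hk => by
        rw [← iteratedDeriv_succ']
        exact hvk (k + 1) (Nat.succ_lt_succ hk))
    rw [h1, h2, hvk m (Nat.lt_succ_self m), ← iteratedDeriv_succ']
    ring

lemma myEqOnDeriv (f g : ℝ → ℝ) (hf : ContDiff ℝ ∞ f) (hg : ContDiff ℝ ∞ g)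
    (h : Set.EqOn f g (Set.Icc (-1:ℝ) 1)) :
    Set.EqOn (deriv f) (deriv g) (Set.Icc (-1:ℝ) 1) := by
  have h1 : Set.EqOn (deriv f) (deriv g) (Set.Ioo (-1:ℝ) 1) := by
    intro x hx
    apply Filter.EventuallyEq.deriv_eq
    exact Filter.eventuallyEq_of_mem (Ioo_mem_nhds hx.1 hx.2)
      (fun y hy => h (Ioo_subset_Icc_self hy))
  have h2 := h1.closure ((contDiff_infty_iff_deriv.mp hf).2.continuous)
    ((contDiff_infty_iff_deriv.mp hg).2.continuous)
  rw [closure_Ioo (by norm_num : (-1:ℝ) ≠ 1)] at h2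
  exact h2

lemma myEqOnIteratedDeriv : ∀ (j : ℕ) (f g : ℝ → ℝ), ContDiff ℝ ∞ f → ContDiff ℝ ∞ g →
    Set.EqOn f g (Set.Icc (-1:ℝ) 1) →
    Set.EqOn (iteratedDeriv j f) (iteratedDeriv j g) (Set.Icc (-1:ℝ) 1) := by
  intro j
  induction j with
  | zero => intro f g _ _ h; simpa using h
  | succ j ih =>
    intro f g hf hg h
    rw [iteratedDeriv_succ', iteratedDeriv_succ']
    exact ih (deriv f) (deriv g) (contDiff_infty_iff_deriv.mp hf).2
      (contDiff_infty_iff_deriv.mp hg).2 (myEqOnDeriv f g hf hg h)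

lemma myCoeffCompNeg (P : ℝ[X]) (m : ℕ) : (P.comp (-X)).coeff m = (-1) ^ m * P.coeff m := by
  induction P using Polynomial.induction_on' with
  | add p q hp hq => simp [add_comp, coeff_add, hp, hq, mul_add]
  | monomial k a =>
    rw [← C_mul_X_pow_eq_monomial, mul_comp, C_comp, pow_comp, X_comp, neg_pow,
      (by rw [← C_1, ← C_neg, ← C_pow] : ((-1 : ℝ[X])) ^ k = C ((-1 : ℝ) ^ k))]
    simp only [coeff_C_mul, mul_comm, coeff_mul_C, coeff_X_pow]
    by_cases h : m = k
    · subst h; simp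
    · simp [h]

lemma mySumEven (c : ℕ → ℝ) (hodd : ∀ m, Odd m → c m = 0) (x : ℝ) (q : ℕ) :
    ∑ m ∈ Finset.range (2 * q), c m * x ^ m = ∑ k ∈ Finset.range q, c (2 * k) * x ^ (2 * k) := by
  induction q with
  | zero => simp
  | succ q ih =>
    have h2 : 2 * (q + 1) = (2 * q + 1) + 1 := by ring
    rw [h2, Finset.sum_range_succ, Finset.sum_range_succ, ih, Finset.sum_range_succ,
      hodd (2 * q + 1) ⟨q, by ring⟩]
    ring

theorem stmt17 (p n : ℕ) (hp : 1 ≤ p) (hpn : p < n)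
    (Λ : ℝ) (hΛ : 0 < Λ) (z : ℝ → ℝ) (hz : EvenEig p n Λ z)
    (lam : Fin (2 * p) → ℂ) (hinj : Function.Injective lam)
    (hroot : ∀ j, lam j ^ (2 * p) = (Λ : ℂ))
    (r : Fin (2 * p) → ℂ) (R : ℝ → ℝ)
    (hR : ∀ x : ℝ, (R x : ℂ) = ∑ j, r j * Complex.exp (Complex.I * lam j * x))
    (hReven : ∀ x, R (-x) = R x)
    (P : Polynomial ℝ) (hP : P.degree ≤ (2 * n - 2 * p - 2 : ℕ))
    (hzRP : ∀ x ∈ Set.Icc (-1:ℝ) 1, z x = R x + P.eval x)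
    (ρ : ℝ → ℝ) (hρ : ContDiff ℝ (⊤ : ℕ∞) ρ) (hRρ : ∀ x : ℝ, R x = ρ (x ^ 2)) :
    ∀ k : ℕ, n - p ≤ k → k ≤ n - 1 → iteratedDeriv k ρ 1 = 0 := by
  intro k hk1 hk2
  obtain ⟨⟨hzs, hzd⟩, _, hzev, _⟩ := hz
  have hzsm : ContDiff ℝ ∞ z := hzs.of_le (by simp)
  have hρsm : ContDiff ℝ ∞ ρ := hρ.of_le (by simp)
  set q := n - p with hqdef
  have hq1 : 1 ≤ q := by omega
  -- P is even as a polynomial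
  have hPIcc : ∀ x ∈ Set.Icc (-1:ℝ) 1, P.eval (-x) = P.eval x := by
    intro x hx
    have hx' : -x ∈ Set.Icc (-1:ℝ) 1 := ⟨by linarith [hx.2], by linarith [hx.1]⟩
    have e1 := hzRP x hx
    have e2 := hzRP (-x) hx'
    rw [hzev x, hReven x] at e2
    linarith
  have hcomp : P.comp (-X) = P := by
    have hzero : P.comp (-X) - P = 0 := by
      apply Polynomial.eq_zero_of_infinite_isRoot
      have hsub : Set.Icc (-1:ℝ) 1 ⊆ {x : ℝ | (P.comp (-X) - P).IsRoot x} := by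
        intro x hx
        simp only [Set.mem_setOf_eq, IsRoot, eval_sub, eval_comp, eval_neg, eval_X]
        rw [hPIcc x hx]
        ring
      exact (Set.Icc_infinite (by norm_num : (-1:ℝ) < 1)).mono hsub
    have := sub_eq_zero.mp hzero
    exact this
  have hodd : ∀ m, Odd m → P.coeff m = 0 := by
    intro m hm
    have h1 : (P.comp (-X)).coeff m = P.coeff m := by rw [hcomp]
    rw [myCoeffCompNeg, hm.neg_one_pow] at h1
    linarith
  have hdeg : P.natDegree < 2 * q := by
    have := Polynomial.natDegree_le_iff_degree_le.mpr hP
    omega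
  -- the polynomial σ with σ(x²) = P(x)
  set σ : ℝ[X] := ∑ j ∈ Finset.range q, C (P.coeff (2 * j)) * X ^ j with hσdef
  have hσdeg : σ.natDegree < q := by
    have h1 : σ.natDegree ≤ q - 1 := by
      apply Polynomial.natDegree_sum_le_of_forall_le
      intro i hi
      exact le_trans (natDegree_C_mul_X_pow_le _ _) (by
        have := Finset.mem_range.mp hi; omega)
    omega
  have hσx : ∀ x : ℝ, σ.eval (x ^ 2) = P.eval x := by
    intro x
    have h1 : σ.eval (x ^ 2) = ∑ j ∈ Finset.range q, P.coeff (2 * j) * (x ^ 2) ^ j := by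
      rw [hσdef, eval_finset_sum]
      simp
    have h2 : P.eval x = ∑ m ∈ Finset.range (2 * q), P.coeff m * x ^ m :=
      eval_eq_sum_range' hdeg x
    rw [h1, h2, mySumEven (fun m => P.coeff m) hodd x q]
    simp [pow_mul]
  -- the function u with u(x²) = z(x) on [-1,1]
  set u : ℝ → ℝ := fun t => ρ t + σ.eval t with hudef
  have husm : ContDiff ℝ ∞ u := hρsm.add (myContDiffPoly σ)
  have hfz : Set.EqOn (fun x => u (x ^ 2)) z (Set.Icc (-1:ℝ) 1) := by
    intro x hx
    show ρ (x ^ 2) + σ.eval (x ^ 2) = z x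
    rw [← hRρ x, hσx x, hzRP x hx]
  have h1Icc : (1:ℝ) ∈ Set.Icc (-1:ℝ) 1 := by norm_num
  have hfj : ∀ j, j < n → iteratedDeriv j (fun x => u (x ^ 2)) 1 = 0 := by
    intro j hj
    have := myEqOnIteratedDeriv j (fun x => u (x ^ 2)) z
      (husm.comp (contDiff_id.pow 2)) hzsm hfz h1Icc
    rw [this]
    exact (hzd j hj).2
  have hukey : ∀ m, m < n → iteratedDeriv m u 1 = 0 := by
    intro m
    induction m using Nat.strong_induction_on with
    | _ m ih =>
      intro hm
      have hF := myClaimF m u (fun _ => (1:ℝ)) husm contDiff_const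
        (fun j hj => ih j hj (hj.trans hm))
      simp only [one_mul, mul_one] at hF
      rw [hfj m hm] at hF
      have h2m : (2:ℝ) ^ m ≠ 0 := pow_ne_zero m two_ne_zero
      have := hF.symm
      rcases mul_eq_zero.mp this with h | h
      · exact absurd h h2m
      · exact h
  have hρeq : ρ = fun t => u t - σ.eval t := by
    funext t
    simp [hudef]
  rw [hρeq, myIteratedDerivSub k u (fun t => σ.eval t) husm (myContDiffPoly σ) 1,
    hukey k (by omega), myIteratedDerivPoly,
    Polynomial.iterate_derivative_eq_zero (lt_of_lt_of_le hσdeg hk1)]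
  simp
end
end
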